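/- In algorithm AlgAU, if every node of the graph is good at time t (protected and sensing no faulty turn), then every node remains good at time t + 1. -/
import Mathlib


set_option autoImplicit false

/-- A turn of AlgAU: able turns `Able(ℓ)` for `1 ≤ |ℓ| ≤ k` and faulty turns
`Faulty(ℓ)` for `2 ≤ |ℓ| ≤ k`. -/
inductive Turn where
  | able (ℓ : ℤ)
  | faulty (ℓ : ℤ)
deriving DecidableEq

/-- The level of a turn. -/
def Turn.level : Turn → ℤ
  | .able ℓ => ℓ
  | .faulty ℓ => ℓ

/-- Whether a turn is able. -/
def Turn.isAble : Turn → Prop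
  | .able _ => True
  | .faulty _ => False

/-- A turn belongs to the state set of AlgAU with parameter `k`. -/
def ValidTurn (k : ℤ) : Turn → Prop
  | .able ℓ => 1 ≤ |ℓ| ∧ |ℓ| ≤ k
  | .faulty ℓ => 2 ≤ |ℓ| ∧ |ℓ| ≤ k

/-- The forward operator: `φ(-1) = 1`, `φ(k) = -k`, `φ(ℓ) = ℓ + 1` otherwise. -/
def forwardOp (k : ℤ) (ℓ : ℤ) : ℤ :=
  if ℓ = -1 then 1 else if ℓ = k then -k else ℓ + 1

/-- Levels `ℓ, ℓ'` are adjacent: `ℓ' ∈ {ℓ, φ(ℓ), φ⁻¹(ℓ)}`. -/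
def adjLvl (k : ℤ) (ℓ ℓ' : ℤ) : Prop :=
  ℓ' = ℓ ∨ ℓ' = forwardOp k ℓ ∨ ℓ = forwardOp k ℓ'

/-- `ψ⁻¹(ℓ)`: the level one unit inwards of `ℓ` (same sign, absolute value decreased). -/
def inwd (ℓ : ℤ) : ℤ := if 0 < ℓ then ℓ - 1 else ℓ + 1

/-- `m` is strictly outwards of `ℓ`: same sign and strictly larger absolute value. -/
def strictOut (ℓ m : ℤ) : Prop := (0 < ℓ ∧ ℓ < m) ∨ (ℓ < 0 ∧ m < ℓ)

/-- The inclusive neighborhood `N⁺(v)`. -/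
def closedNbhd {V : Type} (G : SimpleGraph V) (v : V) : Set V := {u | u = v ∨ G.Adj u v}

/-- Node `v` is protected under configuration `c`: all incident edges have adjacent
endpoint levels. -/
def NodeProt {V : Type} (k : ℤ) (G : SimpleGraph V) (c : V → Turn) (v : V) : Prop :=
  ∀ u, G.Adj u v → adjLvl k ((c v).level) ((c u).level)

/-- Node `v` is good: protected and sensing no faulty turn. -/
def NodeGood {V : Type} (k : ℤ) (G : SimpleGraph V) (c : V → Turn) (v : V) : Prop :=
  NodeProt k G c v ∧ ∀ u ∈ closedNbhd G v, (c u).isAble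

/-- Condition for a type AA transition of `v` from `Able(ℓ)` to `Able(φ(ℓ))`:
`v` is good and all sensed levels belong to `{ℓ, φ(ℓ)}`. -/
def AAcond {V : Type} (k : ℤ) (G : SimpleGraph V) (c : V → Turn) (v : V) (ℓ : ℤ) : Prop :=
  c v = .able ℓ ∧ NodeGood k G c v ∧
    ∀ u ∈ closedNbhd G v, (c u).level = ℓ ∨ (c u).level = forwardOp k ℓ

/-- Condition for a type AF transition of `v` from `Able(ℓ)` to `Faulty(ℓ)`
(`2 ≤ |ℓ|`): `v` is not protected or senses the turn `Faulty(ψ⁻¹(ℓ))`. -/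
def AFcond {V : Type} (k : ℤ) (G : SimpleGraph V) (c : V → Turn) (v : V) (ℓ : ℤ) : Prop :=
  c v = .able ℓ ∧ 2 ≤ |ℓ| ∧
    (¬ NodeProt k G c v ∨ ∃ u ∈ closedNbhd G v, c u = .faulty (inwd ℓ))

/-- Condition for a type FA transition of `v` from `Faulty(ℓ)` to `Able(ψ⁻¹(ℓ))`:
`v` senses no level strictly outwards of `ℓ`. -/
def FAcond {V : Type} (G : SimpleGraph V) (c : V → Turn) (v : V) (ℓ : ℤ) : Prop :=
  c v = .faulty ℓ ∧ ∀ u ∈ closedNbhd G v, ¬ strictOut ℓ ((c u).level)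

/-- The new turn `q` of an activated node `v` in one step of AlgAU. -/
def StepNode {V : Type} (k : ℤ) (G : SimpleGraph V) (c : V → Turn) (v : V) (q : Turn) : Prop :=
  (∀ ℓ, AAcond k G c v ℓ → q = .able (forwardOp k ℓ)) ∧
  (∀ ℓ, AFcond k G c v ℓ → ¬ AAcond k G c v ℓ → q = .faulty ℓ) ∧
  (∀ ℓ, FAcond G c v ℓ → q = .able (inwd ℓ)) ∧
  ((∀ ℓ, ¬ AAcond k G c v ℓ ∧ ¬ AFcond k G c v ℓ ∧ ¬ FAcond G c v ℓ) → q = c v)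

/-- One asynchronous step of AlgAU with activation set `A`: activated nodes follow
the transition rules, the others keep their turns. -/
def Step {V : Type} (k : ℤ) (G : SimpleGraph V) (A : Set V) (c c' : V → Turn) : Prop :=
  ∀ v, (v ∉ A → c' v = c v) ∧ (v ∈ A → StepNode k G c v (c' v))

lemma level_able (ℓ : ℤ) : (Turn.able ℓ).level = ℓ := rfl

lemma valid_level {k : ℤ} {tn : Turn} (h : ValidTurn k tn) :
    1 ≤ |tn.level| ∧ |tn.level| ≤ k := by
  cases tn with
  | able ℓ => exact h
  | faulty ℓ => exact ⟨le_trans one_le_two h.1, h.2⟩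

lemma phi_ne {k ℓ : ℤ} (hk : 2 ≤ k) (h1 : 1 ≤ |ℓ|) (h2 : |ℓ| ≤ k) :
    forwardOp k ℓ ≠ ℓ := by
  have h1' := le_abs.mp h1
  have h2' := abs_le.mp h2
  unfold forwardOp; split_ifs <;> omega

lemma phi2_ne {k ℓ : ℤ} (hk : 2 ≤ k) (h1 : 1 ≤ |ℓ|) (h2 : |ℓ| ≤ k) :
    forwardOp k (forwardOp k ℓ) ≠ ℓ := by
  have h1' := le_abs.mp h1
  have h2' := abs_le.mp h2
  unfold forwardOp; split_ifs <;> omega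

/-- in AlgAU, if every node of the graph is good at time `t`
(protected and sensing no faulty turn), then every node remains good at time `t + 1`. -/
theorem stmt_7 {V : Type} [Fintype V] (G : SimpleGraph V) (D : ℕ) (k : ℤ)
    (hk : k = 3 * D + 2)
    (σ : ℕ → V → Turn) (A : ℕ → Set V)
    (hvalid : ∀ t v, ValidTurn k (σ t v))
    (hstep : ∀ t, Step k G (A t) (σ t) (σ (t + 1)))
    (t : ℕ) (hgood : ∀ v, NodeGood k G (σ t) v) :
    ∀ v, NodeGood k G (σ (t + 1)) v := by
  have hk2 : 2 ≤ k := by omega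
  set c := σ t with hc
  set c' := σ (t + 1) with hc'
  have hable : ∀ u, (c u).isAble := fun u => (hgood u).2 u (Or.inl rfl)
  -- classify the possible transitions of each node
  have hstep' : ∀ w, c' w = c w ∨
      (c' w = .able (forwardOp k ((c w).level)) ∧
        ∀ u ∈ closedNbhd G w,
          (c u).level = (c w).level ∨ (c u).level = forwardOp k ((c w).level)) := by
    intro w
    obtain ⟨hnA, hA⟩ := hstep t w
    by_cases hw : w ∈ A t
    · obtain ⟨haa, _, _, hid⟩ := hA hw
      by_cases hAA : ∃ ℓ, AAcond k G c w ℓ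
      · obtain ⟨ℓ, hℓ⟩ := hAA
        have hℓeq : ℓ = (c w).level := by rw [hℓ.1]; rfl
        right
        refine ⟨hℓeq ▸ haa ℓ hℓ, ?_⟩
        intro u hu
        have h := hℓ.2.2 u hu
        rw [hℓeq] at h; exact h
      · left
        apply hid
        intro ℓ
        refine ⟨fun h => hAA ⟨ℓ, h⟩, ?_, ?_⟩
        · rintro ⟨_, _, hor⟩
          rcases hor with hnp | ⟨u, _, hf⟩
          · exact hnp (hgood w).1
          · have h : (σ t u).isAble := hable u
            rw [hf] at h; exact h
        · rintro ⟨hcw, _⟩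
          have h : (σ t w).isAble := hable w
          rw [hcw] at h; exact h
    · left; exact hnA hw
  intro v
  constructor
  · -- protection
    intro u hadj
    have hadjt : adjLvl k ((c v).level) ((c u).level) := (hgood v).1 u hadj
    obtain ⟨hv1, hv2⟩ := valid_level (hvalid t v)
    rcases hstep' v with hv | ⟨hv, hvN⟩ <;> rcases hstep' u with hu | ⟨hu, huN⟩
    · rw [hv, hu]; exact hadjt
    · -- v stays, u advances
      rw [hv, hu]
      simp only [level_able]
      have h := huN v (Or.inr hadj.symm)
      rcases h with h | h
      · exact Or.inr (Or.inl (by rw [h]))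
      · exact Or.inl h.symm
    · -- v advances, u stays
      rw [hv, hu]
      simp only [level_able]
      have h := hvN u (Or.inr hadj)
      rcases h with h | h
      · exact Or.inr (Or.inr (by rw [h]))
      · exact Or.inl h
    · -- both advance
      rw [hv, hu]
      have h1 := hvN u (Or.inr hadj)
      have h2 := huN v (Or.inr hadj.symm)
      have heq : (c u).level = (c v).level := by
        rcases h1 with h1 | h1
        · exact h1
        · rcases h2 with h2 | h2
          · rw [← h2] at h1; exact absurd h1 (phi_ne hk2 hv1 hv2).symm
          · rw [h1] at h2; exact absurd h2.symm (phi2_ne hk2 hv1 hv2)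
      simp only [level_able]
      exact Or.inl (by rw [heq])
  · -- all sensed turns able
    intro u _
    rcases hstep' u with hu | ⟨hu, _⟩
    · rw [hu]; exact hable u
    · rw [hu]; trivial
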